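/- Let N be a strictly convex and smooth norm on ℝ^{2n}, and let v be an optimal control for the energy problem (P) with g≠e. Then: (e) for every normal Pontryagin multiplier with associated function a and constant R=N(v(s)), one has a(s)=R∇N(v(s)) for all s∈[0,T], so a(s) is uniquely determined by v(s); and (f) the Pontryagin multiplier λ associated to v (and hence the function a) is unique. -/

import Mathlib

/-! By the minimum principle, `v(s)` minimizes `u ↦ F_N(u) - a(s)·u`. Restricted to a line `ℝ u`
this is a nonnegative quadratic in the scaling parameter, and its discriminant gives
`a(s)·v(s) = N(v(s))²` and `a(s)·u ≤ N(v(s)) N(u)`; hence `a(s) = 0` if `v(s) = 0` and otherwise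
`a(s)/N(v(s)) ∈ ∂N(v(s))`, which smoothness makes unique. For uniqueness of the multiplier,
`a(s) = λ(0) - 4k J γ_I(s)`: the value at `s = 0` recovers `λ(0)`, and since `g ≠ e` the horizontal
trajectory `γ_I` is nonzero at some time, where `J γ_I(s) ≠ 0` recovers `k`. -/

open MeasureTheory Set

noncomputable section

/-- `ℝ^{2n}`, with the Euclidean norm. -/
abbrev V (n : ℕ) := EuclideanSpace ℝ (Fin (2 * n))

/-- The `n`-th Heisenberg group as a set: `ℝ^{2n} × ℝ`. -/
abbrev Heis (n : ℕ) := V n × ℝ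

/-- Euclidean dot product on `ℝ^{2n}`. -/
def dot {n : ℕ} (p z : V n) : ℝ := ∑ i, p i * z i

/-- Index `i` as an element of the first half of `Fin (2n)`. -/
def fstIdx {n : ℕ} (i : Fin n) : Fin (2 * n) := ⟨i.1, by have := i.isLt; omega⟩

/-- Index `n + i` as an element of the second half of `Fin (2n)`. -/
def sndIdx {n : ℕ} (i : Fin n) : Fin (2 * n) := ⟨n + i.1, by have := i.isLt; omega⟩

/-- The symplectic form `⟨z, J_n z'⟩ = ∑ (y_i x'_i - x_i y'_i)` on `ℝ^{2n}`. -/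
def symp {n : ℕ} (z z' : V n) : ℝ :=
  ∑ i : Fin n, (z (sndIdx i) * z' (fstIdx i) - z (fstIdx i) * z' (sndIdx i))

/-- Heisenberg group multiplication. -/
def hmul {n : ℕ} (g g' : Heis n) : Heis n :=
  (g.1 + g'.1, g.2 + g'.2 + 2 * symp g.1 g'.1)

/-- Heisenberg group inverse. -/
def hinv {n : ℕ} (g : Heis n) : Heis n := (-g.1, -g.2)

/-- Heisenberg dilation `δ_λ(z,t) = (λ z, λ² t)`. -/
def dil {n : ℕ} (l : ℝ) (g : Heis n) : Heis n := (l • g.1, l ^ 2 * g.2)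

/-- `N : ℝ^{2n} → ℝ` is a norm. -/
structure IsNorm {n : ℕ} (N : V n → ℝ) : Prop where
  nonneg : ∀ z, 0 ≤ N z
  eq_zero_iff : ∀ z, N z = 0 ↔ z = 0
  smul : ∀ (a : ℝ) (z : V n), N (a • z) = |a| * N z
  triangle : ∀ z z', N (z + z') ≤ N z + N z'

/-- `N` is a strictly convex norm: additivity of the norm forces positive collinearity. -/
def StrictlyConvexNorm {n : ℕ} (N : V n → ℝ) : Prop :=
  ∀ z z' : V n, z ≠ 0 → z' ≠ 0 → N (z + z') = N z + N z' →
    ∃ α : ℝ, 0 < α ∧ z' = α • z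

/-- The subdifferential of `f : ℝ^{2n} → ℝ` at `z`. -/
def subdiff {n : ℕ} (f : V n → ℝ) (z : V n) : Set (V n) :=
  {p | ∀ z', f z + dot p (z' - z) ≤ f z'}

/-- A norm is smooth if its subdifferential is a singleton away from the origin. -/
def SmoothNorm {n : ℕ} (N : V n → ℝ) : Prop :=
  ∀ z : V n, z ≠ 0 → ∃ p : V n, subdiff N z = {p}

/-- The dual norm `N_*(p) = sup { p·z : N(z) = 1 }`. -/
def dualN {n : ℕ} (N : V n → ℝ) (p : V n) : ℝ :=
  sSup ((fun z => dot p z) '' {z | N z = 1})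

/-- `F_N(z) = ½ N(z)²`. -/
def FN {n : ℕ} (N : V n → ℝ) (z : V n) : ℝ := (1 / 2) * (N z) ^ 2

/-- The Legendre transform `f*(p) = sup_z (p·z - f(z))`. -/
def legendre {n : ℕ} (f : V n → ℝ) (p : V n) : ℝ :=
  ⨆ z : V n, (dot p z - f z)

/-- A horizontal (absolutely continuous) curve on `[a,b]`, encoded via an integrable
horizontal velocity `v = γ̇_I` together with the integral form of the horizontality
condition for the last coordinate. -/
structure HorizCurve (n : ℕ) (a b : ℝ) where
  γ : ℝ → Heis n
  v : ℝ → V n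
  intg : IntegrableOn v (Icc a b)
  pos : ∀ s ∈ Icc a b, (γ s).1 = (γ a).1 + ∫ u in a..s, v u
  vert : ∀ s ∈ Icc a b, (γ s).2 = (γ a).2 + ∫ u in a..s, 2 * symp ((γ u).1) (v u)

/-- The sub-Finsler distance associated to the norm `N` on `ℍⁿ`. -/
def dSF (n : ℕ) (N : V n → ℝ) (g g' : Heis n) : ℝ :=
  sInf { L | ∃ (a b : ℝ) (c : HorizCurve n a b), a ≤ b ∧ c.γ a = g ∧ c.γ b = g' ∧
    L = ∫ s in a..b, N (c.v s) }

/-- Horizontal projection of the trajectory of the control `v`,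
solving `γ̇_I = -v`, `γ_I(0) = 0`. -/
def trajI (n : ℕ) (v : ℝ → V n) (s : ℝ) : V n := -∫ u in (0:ℝ)..s, v u

/-- The trajectory of the control `v`: solves `ẋ_i = -v_i`, `ẏ_i = -v_{n+i}`,
`ṫ = -2∑(y_i v_i - x_i v_{n+i})`, starting at the neutral element. -/
def traj (n : ℕ) (v : ℝ → V n) (s : ℝ) : Heis n :=
  (trajI n v s, -∫ u in (0:ℝ)..s, 2 * symp (trajI n v u) (v u))

/-- `v` is an admissible control steering `e` to `g` in time `T`. -/
def Admissible (n : ℕ) (T : ℝ) (g : Heis n) (v : ℝ → V n) : Prop :=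
  IntegrableOn v (Icc 0 T) ∧ traj n v T = g

/-- `v` is optimal for the energy problem (P). -/
def OptimalEnergy (n : ℕ) (N : V n → ℝ) (T : ℝ) (g : Heis n) (v : ℝ → V n) : Prop :=
  Admissible n T g v ∧ ∀ w : ℝ → V n, Admissible n T g w →
    (∫ s in (0:ℝ)..T, FN N (v s)) ≤ ∫ s in (0:ℝ)..T, FN N (w s)

/-- `v` is optimal for the length problem. -/
def OptimalLength (n : ℕ) (N : V n → ℝ) (T : ℝ) (g : Heis n) (v : ℝ → V n) : Prop :=
  Admissible n T g v ∧ ∀ w : ℝ → V n, Admissible n T g w →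
    (∫ s in (0:ℝ)..T, N (v s)) ≤ ∫ s in (0:ℝ)..T, N (w s)

/-- The standard symplectic matrix `J_n` acting on `ℝ^{2n}`:
`(J z)_i = -z_{n+i}`, `(J z)_{n+i} = z_i`. -/
def Jmat (n : ℕ) (z : V n) : V n :=
  (EuclideanSpace.equiv (Fin (2 * n)) ℝ).symm
    (fun j => if h : (j : ℕ) < n then -z ⟨n + (j : ℕ), by have := j.isLt; omega⟩
      else z ⟨(j : ℕ) - n, by have := j.isLt; omega⟩)

/-- The function `a` associated to a multiplier `λ` (with `λ_{2n+1} ≡ k`) and a control `v`: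
`a_i = λ_i + 2k y_i`, `a_{n+i} = λ_{n+i} - 2k x_i`, where `(x,y) = γ_I` is the horizontal
projection of the trajectory of `v`. -/
def afun (n : ℕ) (v : ℝ → V n) (lam : ℝ → V n) (k : ℝ) (s : ℝ) : V n :=
  lam s - (2 * k) • Jmat n (trajI n v s)

/-- A Pontryagin multiplier `(λ₀, λ)` for the control `v` on `[0,T]` for problem (P):
`λ = (λ_I, k)` with `λ_{2n+1} ≡ k` constant, `λ̇_i = -2k v_{n+i}`, `λ̇_{n+i} = 2k v_i`
(in integrated form), nontriviality, the pointwise minimum principle, and constancy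
of the minimized Hamiltonian. -/
structure PMP (n : ℕ) (N : V n → ℝ) (T : ℝ) (v : ℝ → V n) (l0 : ℝ) where
  lam : ℝ → V n
  k : ℝ
  lam_eq : ∀ s ∈ Icc (0:ℝ) T,
    lam s = lam 0 + (2 * k) • ∫ u in (0:ℝ)..s, Jmat n (v u)
  nontriv : ¬(l0 = 0 ∧ k = 0 ∧ lam 0 = 0)
  argmin : ∀ s ∈ Icc (0:ℝ) T, ∀ u : V n,
    l0 * FN N (v s) - dot (afun n v lam k s) (v s) ≤ l0 * FN N u - dot (afun n v lam k s) u
  isConst : ∃ c : ℝ, ∀ s ∈ Icc (0:ℝ) T,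
    l0 * FN N (v s) - dot (afun n v lam k s) (v s) = c

/-- A homogeneous norm on the Heisenberg group `ℍⁿ`. -/
structure IsHomNorm {n : ℕ} (Nh : Heis n → ℝ) : Prop where
  nonneg : ∀ g, 0 ≤ Nh g
  eq_zero_iff : ∀ g, Nh g = 0 ↔ g = ((0 : V n), (0 : ℝ))
  symm : ∀ g, Nh (hinv g) = Nh g
  triangle : ∀ g g', Nh (hmul g g') ≤ Nh g + Nh g'
  homog : ∀ l : ℝ, 0 < l → ∀ g, Nh (dil l g) = l * Nh g

/-- The geodesic linearity property: every infinite geodesic of `(ℍⁿ, d)` is an affine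
line in `ℝ^{2n+1}`. -/
def GLP (n : ℕ) (d : Heis n → Heis n → ℝ) : Prop :=
  ∀ γ : ℝ → Heis n, (∀ s s' : ℝ, d (γ s) (γ s') = |s - s'|) →
    ∃ p u : Heis n, ∀ s : ℝ, γ s = p + s • u

/-- An infinite multiplier for the control `v` on `[0,∞)`. -/
def IsInfMult (n : ℕ) (N : V n → ℝ) (v : ℝ → V n) (lam : ℝ → V n) (k : ℝ) : Prop :=
  ∀ T : ℝ, 0 < T → ∃ m : PMP n N T v 1, m.lam = lam ∧ m.k = k

lemma dot_eq_inner {n : ℕ} (p z : V n) : dot p z = inner ℝ p z := by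
  simp [dot, PiLp.inner_apply, mul_comm]

namespace IsNorm

variable {n : ℕ} {N : V n → ℝ}

lemma map_zero (hN : IsNorm N) : N 0 = 0 := (hN.eq_zero_iff 0).mpr rfl

lemma pos (hN : IsNorm N) {z : V n} (hz : z ≠ 0) : 0 < N z :=
  (hN.nonneg z).lt_of_ne' fun h => hz ((hN.eq_zero_iff z).mp h)

lemma quadratic_nonneg_of_isMinOn (hN : IsNorm N) {a z : V n}
    (hmin : IsMinOn (fun u => FN N u - dot a u) univ z) (u : V n) (t : ℝ) :
    0 ≤ (N u ^ 2 / 2) * (t * t) + (-dot a u) * t + (dot a z - N z ^ 2 / 2) := by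
  have h := isMinOn_univ_iff.mp hmin (t • u)
  simp only [FN, hN.smul, mul_pow, sq_abs, dot_eq_inner, inner_smul_right] at h ⊢
  linarith

/-- Along `ℝ z` the quadratic vanishes at `t = 1`, so its discriminant is `(a·z - N(z)²)² ≤ 0`. -/
lemma dot_self_eq_of_isMinOn (hN : IsNorm N) {a z : V n}
    (hmin : IsMinOn (fun u => FN N u - dot a u) univ z) : dot a z = N z ^ 2 := by
  have hdisc := discrim_le_zero (hN.quadratic_nonneg_of_isMinOn hmin z)
  rw [discrim] at hdisc
  nlinarith [sq_nonneg (dot a z - N z ^ 2)]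

lemma dot_le_mul_of_isMinOn (hN : IsNorm N) {a z : V n}
    (hmin : IsMinOn (fun u => FN N u - dot a u) univ z) (u : V n) : dot a u ≤ N z * N u := by
  have hdisc := discrim_le_zero (hN.quadratic_nonneg_of_isMinOn hmin u)
  rw [discrim, hN.dot_self_eq_of_isMinOn hmin] at hdisc
  nlinarith [mul_nonneg (hN.nonneg z) (hN.nonneg u)]

lemma eq_zero_of_isMinOn_zero (hN : IsNorm N) {a : V n}
    (hmin : IsMinOn (fun u => FN N u - dot a u) univ 0) : a = 0 := by
  have h := hN.dot_le_mul_of_isMinOn hmin a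
  rw [hN.map_zero, zero_mul, dot_eq_inner] at h
  exact real_inner_self_nonpos.mp h

lemma inv_smul_mem_subdiff_of_isMinOn (hN : IsNorm N) {a z : V n}
    (hmin : IsMinOn (fun u => FN N u - dot a u) univ z) (hz : z ≠ 0) :
    (N z)⁻¹ • a ∈ subdiff N z := by
  intro u
  have hR := hN.pos hz
  have hu := hN.dot_le_mul_of_isMinOn hmin u
  have hzz := hN.dot_self_eq_of_isMinOn hmin
  rw [dot_eq_inner] at hu hzz
  rw [dot_eq_inner, inner_smul_left, inner_sub_right, hzz, RCLike.conj_to_real,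
    ← sub_nonneg]
  have hsub : N u - (N z + (N z)⁻¹ * (inner ℝ a u - N z ^ 2)) =
      (N z)⁻¹ * (N z * N u - inner ℝ a u) := by
    field_simp; ring
  rw [hsub]
  exact mul_nonneg (inv_nonneg.mpr hR.le) (sub_nonneg.mpr hu)

theorem eq_smul_of_isMinOn (hN : IsNorm N) {a z p : V n} (hp : subdiff N z = {p})
    (hmin : IsMinOn (fun u => FN N u - dot a u) univ z) : a = N z • p := by
  rcases eq_or_ne z 0 with rfl | hz
  · rw [hN.eq_zero_of_isMinOn_zero hmin, hN.map_zero, zero_smul]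
  · have hmem := hN.inv_smul_mem_subdiff_of_isMinOn hmin hz
    rw [hp, mem_singleton_iff] at hmem
    rw [← hmem, smul_inv_smul₀ (hN.pos hz).ne']

theorem eq_of_isMinOn (hN : IsNorm N) (hsm : SmoothNorm N) {a b z : V n}
    (ha : IsMinOn (fun u => FN N u - dot a u) univ z)
    (hb : IsMinOn (fun u => FN N u - dot b u) univ z) : a = b := by
  rcases eq_or_ne z 0 with rfl | hz
  · rw [hN.eq_zero_of_isMinOn_zero ha, hN.eq_zero_of_isMinOn_zero hb]
  · obtain ⟨p, hp⟩ := hsm z hz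
    rw [hN.eq_smul_of_isMinOn hp ha, hN.eq_smul_of_isMinOn hp hb]

end IsNorm

section Symplectic

variable {n : ℕ}

lemma Jmat_apply (z : V n) (j : Fin (2 * n)) :
    Jmat n z j = if h : (j : ℕ) < n then -z ⟨n + (j : ℕ), by have := j.isLt; omega⟩
      else z ⟨(j : ℕ) - n, by have := j.isLt; omega⟩ := rfl

variable (n) in
def JmatCLM : V n →L[ℝ] V n :=
  LinearMap.toContinuousLinearMap
    { toFun := Jmat n
      map_add' := fun x y => by
        ext j
        simp only [Jmat_apply, PiLp.add_apply]
        split <;> ring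
      map_smul' := fun c x => by
        ext j
        simp only [Jmat_apply, PiLp.smul_apply, smul_eq_mul, RingHom.id_apply]
        split <;> ring }

@[simp]
lemma JmatCLM_apply (z : V n) : JmatCLM n z = Jmat n z := rfl

lemma Jmat_Jmat (z : V n) : Jmat n (Jmat n z) = -z := by
  ext j
  have hj := j.isLt
  simp only [Jmat_apply, PiLp.neg_apply]
  split_ifs <;> first | omega | exact congrArg (-z ·) (Fin.ext (by simp only; omega))

lemma Jmat_zero : Jmat n (0 : V n) = 0 := map_zero (JmatCLM n)

lemma Jmat_neg (z : V n) : Jmat n (-z) = -Jmat n z := map_neg (JmatCLM n) z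

lemma Jmat_injective : Function.Injective (Jmat n) :=
  Function.LeftInverse.injective (g := fun z => -Jmat n z) fun z => by
    simp only [Jmat_Jmat, neg_neg]

end Symplectic

lemma trajI_zero {n : ℕ} (v : ℝ → V n) : trajI n v 0 = 0 := by
  simp [trajI]

lemma exists_trajI_ne_zero {n : ℕ} {v : ℝ → V n} {T : ℝ} (hT : 0 ≤ T)
    (h : traj n v T ≠ 0) : ∃ s ∈ Icc 0 T, trajI n v s ≠ 0 := by
  by_contra! hzero
  apply h
  have hvert : (∫ u in (0:ℝ)..T, 2 * symp (trajI n v u) (v u)) = 0 := by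
    rw [intervalIntegral.integral_congr (g := fun _ => (0:ℝ))]
    · simp
    · intro u hu
      rw [uIcc_of_le hT] at hu
      simp [hzero u hu, symp]
  simp only [traj, hzero T ⟨hT, le_rfl⟩, hvert, neg_zero, Prod.mk_zero_zero]

namespace PMP

variable {n : ℕ} {N : V n → ℝ} {T : ℝ} {v : ℝ → V n} {l0 : ℝ}

lemma afun_eq (m : PMP n N T v l0) (hv : IntegrableOn v (Icc 0 T)) {s : ℝ}
    (hs : s ∈ Icc 0 T) :
    afun n v m.lam m.k s = m.lam 0 - (4 * m.k) • Jmat n (trajI n v s) := by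
  have hvs : IntervalIntegrable v volume 0 s :=
    (intervalIntegrable_iff_integrableOn_Icc_of_le hs.1).mpr
      (hv.mono_set (Icc_subset_Icc_right hs.2))
  have hJ : (∫ u in (0:ℝ)..s, Jmat n (v u)) = -Jmat n (trajI n v s) := by
    simpa [trajI, Jmat_neg] using (JmatCLM n).intervalIntegral_comp_comm hvs
  rw [afun, m.lam_eq s hs, hJ]
  module

theorem eq_of_afun_eq (m m' : PMP n N T v l0) (hv : IntegrableOn v (Icc 0 T)) {s₀ : ℝ}
    (hs₀ : s₀ ∈ Icc 0 T) (hx : trajI n v s₀ ≠ 0)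
    (ha : ∀ s ∈ Icc 0 T, afun n v m.lam m.k s = afun n v m'.lam m'.k s) :
    m.k = m'.k ∧ ∀ s ∈ Icc 0 T, m.lam s = m'.lam s := by
  have h0 : (0 : ℝ) ∈ Icc 0 T := ⟨le_rfl, hs₀.1.trans hs₀.2⟩
  have hlam0 : m.lam 0 = m'.lam 0 := by
    simpa [afun, trajI_zero, Jmat_zero] using ha 0 h0
  have hk : m.k = m'.k := by
    have h := ha s₀ hs₀
    rw [m.afun_eq hv hs₀, m'.afun_eq hv hs₀, hlam0, sub_right_inj, ← sub_eq_zero,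
      ← sub_smul, smul_eq_zero] at h
    rcases h with h | h
    · linarith
    · exact absurd (Jmat_injective (h.trans Jmat_zero.symm)) hx
  refine ⟨hk, fun s hs => ?_⟩
  rw [m.lam_eq s hs, m'.lam_eq s hs, hlam0, hk]

end PMP

theorem stmt15_general (n : ℕ) (N : V n → ℝ) (hN : IsNorm N)
    (hsm : SmoothNorm N) (T : ℝ) (hT : 0 < T) (g : Heis n)
    (hg : g ≠ ((0 : V n), (0 : ℝ))) (v : ℝ → V n)
    (hopt : OptimalEnergy n N T g v) :
    (∀ m : PMP n N T v 1, ∀ s ∈ Icc (0:ℝ) T, ∀ p : V n,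
        subdiff N (v s) = {p} → afun n v m.lam m.k s = N (v s) • p)
    ∧ (∀ m m' : PMP n N T v 1,
        m.k = m'.k ∧ ∀ s ∈ Icc (0:ℝ) T, m.lam s = m'.lam s) := by
  obtain ⟨⟨hv, htraj⟩, -⟩ := hopt
  have hmin : ∀ m : PMP n N T v 1, ∀ s ∈ Icc (0:ℝ) T,
      IsMinOn (fun u => FN N u - dot (afun n v m.lam m.k s) u) univ (v s) :=
    fun m s hs => isMinOn_univ_iff.mpr fun u => by simpa only [one_mul] using m.argmin s hs u
  refine ⟨fun m s hs p hp => hN.eq_smul_of_isMinOn hp (hmin m s hs), fun m m' => ?_⟩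
  obtain ⟨s₀, hs₀, hx⟩ := exists_trajI_ne_zero hT.le (htraj ▸ hg)
  exact m.eq_of_afun_eq m' hv hs₀ hx fun s hs =>
    hN.eq_of_isMinOn hsm (hmin m s hs) (hmin m' s hs)

/-- If `N` is strictly convex and smooth and `v` is an optimal control
for the energy problem with `g ≠ e`, then (e) for every normal multiplier the associated
function satisfies `a(s) = N(v(s))·∇N(v(s))`, so `a(s)` is determined by `v(s)`; and
(f) the multiplier (hence `a`) is unique. -/
theorem stmt15 (n : ℕ) (N : V n → ℝ) (hN : IsNorm N) (hsc : StrictlyConvexNorm N)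
    (hsm : SmoothNorm N) (T : ℝ) (hT : 0 < T) (g : Heis n)
    (hg : g ≠ ((0 : V n), (0 : ℝ))) (v : ℝ → V n)
    (hopt : OptimalEnergy n N T g v) :
    (∀ m : PMP n N T v 1, ∀ s ∈ Icc (0:ℝ) T, ∀ p : V n,
        subdiff N (v s) = {p} → afun n v m.lam m.k s = N (v s) • p)
    ∧ (∀ m m' : PMP n N T v 1,
        m.k = m'.k ∧ ∀ s ∈ Icc (0:ℝ) T, m.lam s = m'.lam s) :=
  stmt15_general n N hN hsm T hT g hg v hopt

end
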